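/- Let M be a simple rank-3 matroid on n elements with no coloops. Then c̄₁²(M)/c̄₂(M) = 3 if and only if M is the matroid of a finite projective plane, i.e. the number of rank-2 flats equals n and every pair of rank-2 flats meets. -/

import Mathlib

/- Chern numbers of matroids (Mannino). Background definitions. -/

open scoped Matroid
open Finset

namespace Paper

variable {α : Type*}

/-- The rank of a set in a matroid: the maximal size of an independent subset. -/
noncomputable def mrk (M : Matroid α) (X : Set α) : ℕ :=
  sSup (Set.ncard '' {I | M.Indep I ∧ I ⊆ X})

/-- A matroid is simple if it has no loops and no parallel pairs, i.e. every
subset of the ground set with at most two elements is independent. -/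
def Simple (M : Matroid α) : Prop := ∀ e ∈ M.E, ∀ f ∈ M.E, M.Indep {e, f}

/-- A matroid is loopless if every singleton of the ground set is independent. -/
def Loopless (M : Matroid α) : Prop := ∀ e ∈ M.E, M.Indep {e}

/-- A coloop is an element contained in every base. -/
def Coloop (M : Matroid α) (e : α) : Prop := e ∈ M.E ∧ ∀ B, M.IsBase B → e ∈ B

/-- `t M m` is the number of rank-2 flats of `M` of size `m`. -/
noncomputable def t (M : Matroid α) (m : ℕ) : ℕ :=
  {F : Set α | M.IsFlat F ∧ mrk M F = 2 ∧ F.ncard = m}.ncard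

/-- The first Chern number `c̄₁²` of a simple rank-3 matroid,
`9 - 5n + ∑_{m ≥ 2} (3m-4) t_m`. -/
noncomputable def c1sq (M : Matroid α) : ℤ :=
  9 - 5 * (M.E.ncard : ℤ) +
    ∑ m ∈ Finset.Icc 2 M.E.ncard, (3 * (m : ℤ) - 4) * t M m

/-- The second Chern number `c̄₂` of a simple rank-3 matroid,
`3 - 2n + ∑_{m ≥ 2} (m-1) t_m`. -/
noncomputable def c2 (M : Matroid α) : ℤ :=
  3 - 2 * (M.E.ncard : ℤ) +
    ∑ m ∈ Finset.Icc 2 M.E.ncard, ((m : ℤ) - 1) * t M m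

/-- The beta invariant of a matroid on a finite type (Crapo's formula):
`β(M) = (-1)^{r(E)} ∑_{S ⊆ E} (-1)^{|S|} r(S)`. -/
noncomputable def beta (M : Matroid α) [Fintype α] : ℤ :=
  (-1) ^ (mrk M M.E) *
    ∑ S ∈ (Set.toFinite M.E).toFinset.powerset,
      (-1 : ℤ) ^ S.card * (mrk M (S : Set α) : ℤ)

/-- `M` is the uniform matroid of rank `r` on its ground set: the independent
sets are exactly the finite subsets of the ground set of size at most `r`. -/
def IsUniform (M : Matroid α) (r : ℕ) : Prop :=
  ∀ I, I ⊆ M.E → (M.Indep I ↔ I.Finite ∧ I.ncard ≤ r)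

end Paper

/-! The rank-2 flats of a simple rank-3 matroid are the lines of a linear space on the ground set
(`Configuration.HasLines`), and unfolding the definitions gives `c̄₁² - 3 c̄₂ = n - b`, where `b` is
the number of lines. If the ratio is `3`, then `b = n` and the de Bruijn–Erdős theorem
(`Configuration.HasLines.hasPoints`) makes any two lines meet. Conversely, if `b = n` and lines
meet pairwise, the absence of coloops says that every line misses two points, which puts every
point on at least three lines; counting incidences then gives
`c̄₂ = 3 - 3n + ∑ₚ #{lines through p} ≥ 3`, so the ratio is defined and equals `3`. -/

namespace Configuration

variable {P L : Type*} [Membership P L] [HasLines P L]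

open Nondegenerate HasLines

theorem HasLines.mem_or_mem_of_lineCount_le_two [Finite L] {p : P} (hp : lineCount L p ≤ 2)
    {A B : L} (hAB : A ≠ B) (hpA : p ∈ A) (hpB : p ∈ B) (x : P) : x ∈ A ∨ x ∈ B := by
  by_contra! hx
  have hpx : p ≠ x := fun h => hx.1 (h ▸ hpA)
  set C : L := mkLine hpx
  have hCA : C ≠ A := fun h => hx.1 (h ▸ (mkLine_ax hpx).2)
  have hCB : C ≠ B := fun h => hx.2 (h ▸ (mkLine_ax hpx).2)
  have h3 : ({A, B, C} : Set L).ncard ≤ {l : L | p ∈ l}.ncard :=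
    Set.ncard_le_ncard (by simp [Set.insert_subset_iff, hpA, hpB, C, (mkLine_ax hpx).1])
  rw [Set.ncard_eq_three.2 ⟨A, B, C, hAB, hCA.symm, hCB.symm, rfl⟩] at h3
  exact absurd (h3.trans hp) (by norm_num)

/-- If only `A` and `B` passed through `p`, they would cover every point, and two lines `uv`, `u'v'`
with `u ≠ u'` on `A \ B` and `v ≠ v'` on `B \ A` could meet neither on `A` nor on `B`. -/
theorem HasLines.two_lt_lineCount [Finite L]
    (hmeet : ∀ l₁ l₂ : L, l₁ ≠ l₂ → ∃ p : P, p ∈ l₁ ∧ p ∈ l₂)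
    (hmiss : ∀ l : L, ∃ p₁ p₂ : P, p₁ ≠ p₂ ∧ p₁ ∉ l ∧ p₂ ∉ l) (p : P) :
    2 < lineCount L p := by
  by_contra! hp
  have eq_of_mem : ∀ {a b : P} {l₁ l₂ : L}, a ∈ l₁ → b ∈ l₁ → a ∈ l₂ → b ∈ l₂ → l₁ ≠ l₂ →
      a = b := fun h₁ h₂ h₃ h₄ hne => (eq_or_eq h₁ h₂ h₃ h₄).resolve_right hne
  obtain ⟨q, hpq⟩ : ∃ q, p ≠ q := by
    obtain ⟨p₁, p₂, h₁₂, -, -⟩ := hmiss (exists_line (L := L) p).choose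
    by_cases h : p = p₁
    · exact ⟨p₂, h ▸ h₁₂⟩
    · exact ⟨p₁, h⟩
  set A : L := mkLine hpq
  obtain ⟨v, v', hvv', hvA, hv'A⟩ := hmiss A
  have hpv : p ≠ v := fun h => hvA (h ▸ (mkLine_ax hpq).1)
  set B : L := mkLine hpv
  have hAB : A ≠ B := fun h => hvA (h ▸ (mkLine_ax hpv).2)
  have hcover := mem_or_mem_of_lineCount_le_two hp hAB (mkLine_ax hpq).1 (mkLine_ax hpv).1
  obtain ⟨u, u', huu', huB, hu'B⟩ := hmiss B
  have huA := (hcover u).resolve_right huB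
  have hu'A := (hcover u').resolve_right hu'B
  have hv'B := (hcover v').resolve_left hv'A
  have huv : u ≠ v := fun h => hvA (h ▸ huA)
  have hu'v' : u' ≠ v' := fun h => hv'A (h ▸ hu'A)
  set m : L := mkLine huv
  set m' : L := mkLine hu'v'
  have hmA : A ≠ m := fun h => hvA (h ▸ (mkLine_ax huv).2)
  have hm'A : A ≠ m' := fun h => hv'A (h ▸ (mkLine_ax hu'v').2)
  have hmB : B ≠ m := fun h => huB (h ▸ (mkLine_ax huv).1)
  have hm'B : B ≠ m' := fun h => hu'B (h ▸ (mkLine_ax hu'v').1)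
  obtain ⟨z, hzm, hzm'⟩ : ∃ z, z ∈ m ∧ z ∈ m' := by
    by_cases hmm' : m = m'
    · exact ⟨u, (mkLine_ax huv).1, hmm' ▸ (mkLine_ax huv).1⟩
    · exact hmeet m m' hmm'
  rcases hcover z with hzA | hzB
  · exact huu' ((eq_of_mem hzA huA hzm (mkLine_ax huv).1 hmA).symm.trans
      (eq_of_mem hzA hu'A hzm' (mkLine_ax hu'v').1 hm'A))
  · exact hvv' ((eq_of_mem hzB (mkLine_ax hpv).2 hzm (mkLine_ax huv).2 hmB).symm.trans
      (eq_of_mem hzB hv'B hzm' (mkLine_ax hu'v').2 hm'B))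

end Configuration

namespace Paper

variable {α : Type*} {M : Matroid α} {F G I : Set α} {p q : α}

lemma mrk_eq_eRk [M.RankFinite] (X : Set α) : (mrk M X : ℕ∞) = M.eRk X := by
  obtain ⟨I, hI⟩ := M.exists_isBasis' X
  have hmax : IsGreatest (Set.ncard '' {J | M.Indep J ∧ J ⊆ X}) I.ncard := by
    refine ⟨⟨I, ⟨hI.indep, hI.subset⟩, rfl⟩, ?_⟩
    rintro _ ⟨J, ⟨hJ, hJX⟩, rfl⟩
    have hle := hJ.encard_le_eRk_of_subset hJX
    rw [← hI.encard_eq_eRk, ← hJ.finite.cast_ncard_eq, ← hI.indep.finite.cast_ncard_eq] at hle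
    exact_mod_cast hle
  rw [mrk, hmax.csSup_eq, hI.indep.finite.cast_ncard_eq, hI.encard_eq_eRk]

def IsLine (M : Matroid α) (F : Set α) : Prop := M.IsFlat F ∧ mrk M F = 2

lemma isLine_iff [M.RankFinite] : IsLine M F ↔ M.IsFlat F ∧ M.eRk F = 2 := by
  rw [IsLine, ← mrk_eq_eRk]
  norm_cast

lemma isLine_closure_of_indep [M.RankFinite] (hI : M.Indep I) (hI2 : I.encard = 2) :
    IsLine M (M.closure I) :=
  isLine_iff.2 ⟨M.isFlat_closure I, by rw [Matroid.eRk_closure_eq, hI.eRk_eq_encard, hI2]⟩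

lemma isLine_closure_pair [M.RankFinite] (hs : Simple M) (hp : p ∈ M.E) (hq : q ∈ M.E)
    (hpq : p ≠ q) : IsLine M (M.closure {p, q}) :=
  isLine_closure_of_indep (hs p hp q hq) (Set.encard_pair hpq)

lemma IsLine.eq_closure_pair [M.RankFinite] (hs : Simple M) (hF : IsLine M F) (hp : p ∈ F)
    (hq : q ∈ F) (hpq : p ≠ q) : F = M.closure {p, q} := by
  obtain ⟨hFflat, hF2⟩ := isLine_iff.1 hF
  have hind := hs p (hFflat.subset_ground hp) q (hFflat.subset_ground hq)
  rw [(M.isRkFinite_set _).closure_eq_closure_of_subset_of_eRk_ge_eRk (Set.pair_subset hp hq)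
    (by rw [hind.eRk_eq_encard, Set.encard_pair hpq, hF2]), hFflat.closure]

lemma IsLine.eq_of_mem_of_mem [M.RankFinite] (hs : Simple M) (hF : IsLine M F)
    (hG : IsLine M G) (hpF : p ∈ F) (hqF : q ∈ F) (hpG : p ∈ G) (hqG : q ∈ G) (hpq : p ≠ q) :
    F = G :=
  (hF.eq_closure_pair hs hpF hqF hpq).trans (hG.eq_closure_pair hs hpG hqG hpq).symm

lemma IsLine.two_le_ncard [M.Finite] (hF : IsLine M F) : 2 ≤ F.ncard := by
  have h := M.eRk_le_encard F
  rw [(isLine_iff.1 hF).2, ← (M.ground_finite.subset hF.1.subset_ground).cast_ncard_eq] at h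
  exact_mod_cast h

lemma IsLine.exists_mem_ground_notMem [M.RankFinite] (hr : M.eRank = 3) (hF : IsLine M F) :
    ∃ x ∈ M.E, x ∉ F := by
  by_contra! h
  have hF2 := (isLine_iff.1 hF).2
  rw [hF.1.subset_ground.antisymm h, Matroid.eRk_ground, hr] at hF2
  norm_num at hF2

lemma exists_isLine_notMem [M.RankFinite] (hs : Simple M) (hr : M.eRank = 3) (hp : p ∈ M.E) :
    ∃ F, IsLine M F ∧ p ∉ F := by
  obtain ⟨B, hB, hpB⟩ := (show M.Indep {p} by simpa using hs p hp p hp).exists_isBase_superset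
  rw [Set.singleton_subset_iff] at hpB
  refine ⟨M.closure (B \ {p}), isLine_closure_of_indep (hB.indep.subset Set.sdiff_subset) ?_,
    hB.indep.notMem_closure_sdiff_of_mem hpB⟩
  rw [Set.encard_sdiff_singleton_of_mem hpB, hB.encard_eq_eRank, hr]; rfl

lemma IsLine.exists_pair_notMem [M.RankFinite] (hr : M.eRank = 3) (hc : ∀ e, ¬ Coloop M e)
    (hF : IsLine M F) : ∃ x y, x ∈ M.E \ F ∧ y ∈ M.E \ F ∧ x ≠ y := by
  obtain ⟨x, hxE, hxF⟩ := hF.exists_mem_ground_notMem hr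
  by_contra! h
  -- no base fits in the rank-2 flat `F`, so every base contains the only point `x` off `F`
  refine hc x ⟨hxE, fun B hB => ?_⟩
  obtain ⟨y, hyB, hyF⟩ := Set.not_subset.1 fun hBF : B ⊆ F => by
    have hle := hB.indep.encard_le_eRk_of_subset hBF
    rw [hB.encard_eq_eRank, hr, (isLine_iff.1 hF).2] at hle
    norm_num at hle
  rwa [← h y x ⟨hB.subset_ground hyB, hyF⟩ ⟨hxE, hxF⟩]

open Configuration

abbrev Line (M : Matroid α) := {F : Set α // IsLine M F}

instance : Membership M.E (Line M) := ⟨fun l p => (p : α) ∈ l.1⟩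

instance [M.Finite] : Finite (Line M) :=
  (M.ground_finite.finite_subsets.subset fun _ hF => hF.1.subset_ground).to_subtype

noncomputable abbrev Line.hasLines [M.RankFinite] (hs : Simple M) (hr : M.eRank = 3) :
    HasLines M.E (Line M) where
  exists_point l := let ⟨x, hx, hxl⟩ := l.2.exists_mem_ground_notMem hr; ⟨⟨x, hx⟩, hxl⟩
  exists_line p := let ⟨F, hF, hpF⟩ := exists_isLine_notMem hs hr p.2; ⟨⟨F, hF⟩, hpF⟩
  eq_or_eq {_ _ l m} hpl hql hpm hqm := or_iff_not_imp_left.2 fun hpq =>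
    Subtype.ext (l.2.eq_of_mem_of_mem hs m.2 hpl hql hpm hqm (Subtype.coe_ne_coe.2 hpq))
  mkLine {p q} hpq :=
    ⟨M.closure {p.1, q.1}, isLine_closure_pair hs p.2 q.2 (Subtype.coe_ne_coe.2 hpq)⟩
  mkLine_ax {p q} _ := ⟨M.mem_closure_of_mem (Set.mem_insert _ _) (Set.pair_subset p.2 q.2),
    M.mem_closure_of_mem (Set.mem_insert_of_mem _ rfl) (Set.pair_subset p.2 q.2)⟩

lemma pointCount_eq_ncard (l : Line M) : pointCount M.E l = l.1.ncard :=
  Nat.card_congr (Equiv.subtypeSubtypeEquivSubtype fun hx => l.2.1.subset_ground hx)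

lemma t_eq_card_filter [Fintype (Line M)] (m : ℕ) : t M m = #{l : Line M | l.1.ncard = m} := by
  rw [t, ← Set.ncard_coe_finset, ← Set.ncard_image_of_injective _ Subtype.val_injective]
  congr 1
  ext F
  simp only [Set.mem_ofPred_eq, coe_filter, mem_univ, true_and]
  constructor
  · rintro ⟨hflat, hrk, hcard⟩
    exact ⟨⟨F, hflat, hrk⟩, hcard, rfl⟩
  · rintro ⟨l, hl, rfl⟩
    exact ⟨l.2.1, l.2.2, hl⟩

lemma sum_Icc_mul_t_eq_sum_line [M.Finite] [Fintype (Line M)] (f : ℕ → ℤ) :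
    ∑ m ∈ Icc 2 M.E.ncard, f m * t M m = ∑ l : Line M, f l.1.ncard := by
  have hmaps : ∀ l ∈ (univ : Finset (Line M)), l.1.ncard ∈ Icc 2 M.E.ncard := fun l _ =>
    mem_Icc.2 ⟨l.2.two_le_ncard, Set.ncard_le_ncard l.2.1.subset_ground M.ground_finite⟩
  rw [← sum_fiberwise_of_maps_to hmaps]
  refine sum_congr rfl fun m _ => ?_
  rw [sum_congr rfl fun l hl => congrArg f (mem_filter.1 hl).2, sum_const, nsmul_eq_mul,
    t_eq_card_filter, mul_comm]

lemma c1sq_sub_three_mul_c2 [M.Finite] :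
    c1sq M - 3 * c2 M = M.E.ncard - Nat.card (Line M) := by
  have := Fintype.ofFinite (Line M)
  rw [c1sq, c2, sum_Icc_mul_t_eq_sum_line (fun m => 3 * (m : ℤ) - 4),
    sum_Icc_mul_t_eq_sum_line (fun m => (m : ℤ) - 1),
    Nat.card_eq_fintype_card, ← card_univ]
  simp only [sum_sub_distrib, ← mul_sum, sum_const, nsmul_eq_mul, mul_one]
  ring

lemma IsLine.inter_nonempty_of_card_eq [M.Finite] (hs : Simple M) (hr : M.eRank = 3)
    (hb : Nat.card (Line M) = M.E.ncard) (hF : IsLine M F) (hG : IsLine M G) :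
    (F ∩ G).Nonempty := by
  let := Line.hasLines hs hr
  have := M.ground_finite.fintype
  have := Fintype.ofFinite (Line M)
  by_cases hFG : F = G
  · rw [hFG, Set.inter_self]
    exact Set.nonempty_of_ncard_ne_zero (by linarith [hG.two_le_ncard])
  · have hPL : Fintype.card M.E = Fintype.card (Line M) := by
      rw [← Nat.card_eq_fintype_card, ← Nat.card_eq_fintype_card, hb, Nat.card_coe_set_eq]
    let := HasLines.hasPoints hPL
    have hne : (⟨F, hF⟩ : Line M) ≠ ⟨G, hG⟩ := fun h => hFG (congrArg Subtype.val h)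
    exact ⟨_, HasPoints.mkPoint_ax hne⟩

lemma three_le_c2 [M.Finite] (hs : Simple M) (hr : M.eRank = 3) (hc : ∀ e, ¬ Coloop M e)
    (hb : Nat.card (Line M) = M.E.ncard)
    (hmeet : ∀ F G, IsLine M F → IsLine M G → (F ∩ G).Nonempty) : 3 ≤ c2 M := by
  let := Line.hasLines hs hr
  have := M.ground_finite.fintype
  have := Fintype.ofFinite (Line M)
  have hdeg (p : M.E) : 2 < lineCount (Line M) p := by
    refine HasLines.two_lt_lineCount (fun l₁ l₂ _ => ?_) (fun l => ?_) p
    · obtain ⟨x, hx₁, hx₂⟩ := hmeet _ _ l₁.2 l₂.2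
      exact ⟨⟨x, l₁.2.1.subset_ground hx₁⟩, hx₁, hx₂⟩
    · obtain ⟨x, y, hx, hy, hxy⟩ := l.2.exists_pair_notMem hr hc
      exact ⟨⟨x, hx.1⟩, ⟨y, hy.1⟩, Subtype.coe_ne_coe.1 hxy, hx.2, hy.2⟩
  have hsum : ∑ l : Line M, (l.1.ncard : ℤ) = ∑ p : M.E, (lineCount (Line M) p : ℤ) := by
    simp_rw [← pointCount_eq_ncard]
    exact_mod_cast (sum_lineCount_eq_sum_pointCount M.E (Line M)).symm
  have hlower : ∑ p : M.E, (3 : ℤ) ≤ ∑ p : M.E, (lineCount (Line M) p : ℤ) :=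
    sum_le_sum fun p _ => by exact_mod_cast hdeg p
  rw [c2, sum_Icc_mul_t_eq_sum_line (fun m => (m : ℤ) - 1), sum_sub_distrib, hsum]
  simp only [sum_const, card_univ, ← Nat.card_eq_fintype_card, hb, nsmul_eq_mul] at hlower ⊢
  rw [Nat.card_coe_set_eq] at hlower
  linarith

end Paper

open Paper

/-- For a simple rank-3 matroid on `n` elements with no coloops,
`c̄₁²(M)/c̄₂(M) = 3` iff `M` is the matroid of a finite projective plane, i.e. the
number of rank-2 flats equals `n` and every two rank-2 flats meet. -/
theorem stmt_11 {α : Type*} (M : Matroid α) (n : ℕ) (hE : M.E.Finite)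
    (hn : M.E.ncard = n) (hs : Simple M) (hr : mrk M M.E = 3)
    (hc : ∀ e, ¬ Coloop M e) :
    (c1sq M : ℚ) / (c2 M : ℚ) = 3 ↔
      ({F : Set α | M.IsFlat F ∧ mrk M F = 2}.ncard = n ∧
        ∀ F G : Set α, M.IsFlat F → mrk M F = 2 → M.IsFlat G → mrk M G = 2 →
          (F ∩ G).Nonempty) := by
  subst hn
  have : M.Finite := ⟨hE⟩
  have hr3 : M.eRank = 3 := by rw [← M.eRk_ground, ← mrk_eq_eRk, hr]; rfl
  have hkey := c1sq_sub_three_mul_c2 (M := M)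
  change _ ↔ Nat.card (Line M) = _ ∧ _
  constructor
  · intro h
    have hc2 : (c2 M : ℚ) ≠ 0 := by
      rintro h0
      simp [h0] at h
    have hb : Nat.card (Line M) = M.E.ncard := by
      rw [div_eq_iff hc2] at h
      have : c1sq M = 3 * c2 M := by exact_mod_cast h
      omega
    exact ⟨hb, fun F G hF hF2 hG hG2 =>
      IsLine.inter_nonempty_of_card_eq hs hr3 hb ⟨hF, hF2⟩ ⟨hG, hG2⟩⟩
  · rintro ⟨hb, hmeet⟩
    have hc2 : 3 ≤ c2 M := three_le_c2 hs hr3 hc hb fun F G hF hG => hmeet F G hF.1 hF.2 hG.1 hG.2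
    rw [div_eq_iff (by exact_mod_cast (show c2 M ≠ 0 by omega))]
    exact_mod_cast (by omega : c1sq M = 3 * c2 M)
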